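/- Let N ≥ 1, let C ∈ ℝ^{N×N} be an orthogonal matrix (C Cᵀ = I), let d ∈ ℝ^N, fix a row vector x ∈ ℝ^N, and let L : ℝ^N → ℝ be differentiable. For a ∈ ℝ^N define y(a) = x · diag(a) C diag(d) Cᵀ ∈ ℝ^N, and let g = ∇L(y(a)). Then the gradient of the map a ↦ L(y(a)) at a is x ⊙ (C (d ⊙ (Cᵀ g))), where ⊙ denotes the elementwise (Hadamard) product. -/
import Mathlib


open Matrix

/-- Backward-pass gradient for the diagonal parameters `a` of an ACDC layer: with `C`
orthogonal, `y(a) = x · diag(a) C diag(d) Cᵀ` and `g = ∇L(y(a))`, the gradient of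
`a ↦ L(y(a))` at `a` is `x ⊙ (C (d ⊙ (Cᵀ g)))`. -/
theorem acdc_a_gradient (N : ℕ) (hN : 1 ≤ N)
    (C : Matrix (Fin N) (Fin N) ℝ) (hC : C * Cᵀ = 1)
    (d : Fin N → ℝ) (x : Fin N → ℝ)
    (L : (Fin N → ℝ) → ℝ) (hL : Differentiable ℝ L)
    (a : Fin N → ℝ)
    (g : Fin N → ℝ)
    (hg : ∀ i, fderiv ℝ L
      (Matrix.vecMul x (Matrix.diagonal a * C * Matrix.diagonal d * Cᵀ))
      (Pi.single i 1) = g i) :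
    ∀ j, fderiv ℝ
        (fun a' => L (Matrix.vecMul x (Matrix.diagonal a' * C * Matrix.diagonal d * Cᵀ)))
        a (Pi.single j 1)
      = x j * C.mulVec (fun k => d k * Cᵀ.mulVec g k) j := by
  intro j
  set M : Matrix (Fin N) (Fin N) ℝ := C * Matrix.diagonal d * Cᵀ with hM
  set φ : (Fin N → ℝ) →L[ℝ] (Fin N → ℝ) :=
    (Matrix.mulVecLin (Mᵀ * Matrix.diagonal x)).toContinuousLinearMap with hφ
  have hfun : ∀ a' : Fin N → ℝ,
      Matrix.vecMul x (Matrix.diagonal a' * C * Matrix.diagonal d * Cᵀ) = φ a' := by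
    intro a'
    have h1 : Matrix.diagonal a' * C * Matrix.diagonal d * Cᵀ = Matrix.diagonal a' * M := by
      rw [hM, Matrix.mul_assoc, Matrix.mul_assoc, Matrix.mul_assoc]
    rw [h1]
    funext k
    simp only [hφ, LinearMap.coe_toContinuousLinearMap', Matrix.mulVecLin_apply,
      ← Matrix.mulVec_mulVec, Matrix.vecMul, Matrix.mulVec, dotProduct,
      Matrix.mul_apply, Matrix.transpose_apply, Matrix.diagonal_apply, ite_mul, mul_ite, zero_mul, mul_zero,
      Finset.sum_ite_eq, Finset.sum_ite_eq', Finset.mem_univ, if_true,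
      Finset.sum_mul, Finset.mul_sum]
    apply Finset.sum_congr rfl
    intro i _
    ring
  have hcomp : (fun a' => L (Matrix.vecMul x
      (Matrix.diagonal a' * C * Matrix.diagonal d * Cᵀ))) = fun a' => L (φ a') := by
    funext a'; rw [hfun]
  rw [hcomp]
  have hder : fderiv ℝ (fun a' => L (φ a')) a
      = (fderiv ℝ L (φ a)).comp (φ : (Fin N → ℝ) →L[ℝ] (Fin N → ℝ)) := by
    have := (hL (φ a)).hasFDerivAt.comp a φ.hasFDerivAt
    exact this.fderiv
  rw [hder]
  have hy : Matrix.vecMul x (Matrix.diagonal a * C * Matrix.diagonal d * Cᵀ) = φ a := hfun a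
  have hsingle : φ (Pi.single j 1) = fun k => x j * M j k := by
    funext k
    simp only [hφ, LinearMap.coe_toContinuousLinearMap', Matrix.mulVecLin_apply,
      Matrix.mulVec, dotProduct, Matrix.mul_apply, Matrix.transpose_apply,
      Matrix.diagonal_apply, Pi.single_apply, ite_mul, mul_ite, zero_mul, mul_zero,
      Finset.sum_ite_eq, Finset.sum_ite_eq', Finset.mem_univ, if_true]
    ring
  have hexp : (fun k => x j * M j k)
      = ∑ i, (x j * M j i) • (Pi.single i 1 : Fin N → ℝ) := by
    funext k
    simp [Finset.sum_apply, Pi.single_apply, mul_comm]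
  rw [ContinuousLinearMap.comp_apply, hsingle, hexp, map_sum]
  simp only [ContinuousLinearMap.map_smul, smul_eq_mul]
  rw [← hy]
  simp only [hg]
  simp only [hM, Matrix.mulVec, dotProduct, Matrix.mul_apply,
    Matrix.transpose_apply, Matrix.diagonal_apply, ite_mul, mul_ite, zero_mul, mul_zero,
    Finset.sum_ite_eq, Finset.sum_ite_eq', Finset.mem_univ, if_true,
    Finset.sum_mul, Finset.mul_sum]
  rw [Finset.sum_comm]
  apply Finset.sum_congr rfl
  intro k _
  apply Finset.sum_congr rfl
  intro i _
  ring
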